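/- Let G = SL(2,3) be the special linear group of 2×2 matrices of determinant 1 over the field with 3 elements, let A be a Sylow 2-subgroup of G (so A is isomorphic to the quaternion group Q₈), and let H be a cyclic subgroup of A of order 4. Then A is a (0,2)-regular set of the pair (G,H), yet G ≠ N_G(H)A. (In particular, the converse of the first assertion of Theorem C fails for s = 2.) -/

import Mathlib

open scoped Pointwise

/-- A subset `C` of the vertices of a graph `Γ` is an `(r,s)`-regular set if every vertex
in `C` has exactly `r` neighbours in `C` and every vertex outside `C` has exactly `s`
neighbours in `C`. -/
def IsRegularVertexSet {V : Type*} (Γ : SimpleGraph V) (C : Set V) (r s : ℕ) : Prop :=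
  (∀ v ∈ C, {w | w ∈ C ∧ Γ.Adj v w}.ncard = r) ∧
  ∀ v ∉ C, {w | w ∈ C ∧ Γ.Adj v w}.ncard = s

/-- The coset graph `Cos(G,H,U)` on the left cosets of `H` in `G`:
`g₁H` and `g₂H` are adjacent iff `g₁⁻¹ g₂ ∈ U`. -/
def cosetGraph {G : Type*} [Group G] (H : Subgroup G) (U : Set G) : SimpleGraph (G ⧸ H) :=
  SimpleGraph.fromRel fun C D =>
    ∃ g₁ g₂ : G, QuotientGroup.mk g₁ = C ∧ QuotientGroup.mk g₂ = D ∧ g₁⁻¹ * g₂ ∈ U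

/-- `U` is a valid connection set for a coset graph `Cos(G,H,U)`:
inverse-closed, disjoint from `H`, and a union of double cosets of `H` (`HUH = U`). -/
def IsCosetGraphConnectionSet {G : Type*} [Group G] (H : Subgroup G) (U : Set G) : Prop :=
  U⁻¹ = U ∧ (H : Set G) ∩ U = ∅ ∧ (H : Set G) * U * (H : Set G) = U

/-- `A` is an `(r,s)`-regular set of the pair `(G,H)`: there is a coset graph
`Cos(G,H,U)` in which the set of left cosets of `H` in `A` is an `(r,s)`-regular set. -/
def IsRegularSetOfPair {G : Type*} [Group G] (H A : Subgroup G) (r s : ℕ) : Prop :=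
  ∃ U : Set G, IsCosetGraphConnectionSet H U ∧
    IsRegularVertexSet (cosetGraph H U)
      {C : G ⧸ H | ∃ a ∈ A, QuotientGroup.mk a = C} r s

/-- `A` is a perfect code of the pair `(G,H)` iff it is a `(0,1)`-regular set of `(G,H)`. -/
def IsPerfectCodeOfPair {G : Type*} [Group G] (H A : Subgroup G) : Prop :=
  IsRegularSetOfPair H A 0 1

/-- A subgroup `A` is an `(r,s)`-regular set of `G` iff it is an `(r,s)`-regular set of
the pair `(G,1)`, i.e. an `(r,s)`-regular set in some Cayley graph of `G`. -/
def IsRegularSetOfGroup {G : Type*} [Group G] (A : Subgroup G) (r s : ℕ) : Prop :=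
  IsRegularSetOfPair ⊥ A r s

/-- A subgroup `A` is a perfect code of `G` iff it is a `(0,1)`-regular set of `G`. -/
def IsPerfectCodeOfGroup {G : Type*} [Group G] (A : Subgroup G) : Prop :=
  IsRegularSetOfGroup A 0 1

/-- The conjugate subgroup `K^t = t⁻¹ K t`. -/
def conjSub {G : Type*} [Group G] (K : Subgroup G) (t : G) : Subgroup G :=
  K.map (MulAut.conj t⁻¹).toMonoidHom

/-!
With connection set `U = G \ A`, the cosets inside `A` are pairwise non-adjacent and every
coset outside `A` is adjacent to all `|A : H|` cosets inside it, so `A` is a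
`(0, |A : H|)`-regular set of `(G, H)`; here `|A : H| = |Q₈| / 4 = 2`. On the other hand `H` has
index `2` in `A`, so `A` normalizes `H` and `N_G(H) A = N_G(H)`, which is proper because
conjugation by the transvection `!![1, 1; 0, 1]` moves every cyclic subgroup of order `4`
of `SL(2,3)`.
-/

open scoped MatrixGroups
open Subgroup

section

variable {G : Type*} [Group G] {H A : Subgroup G}

theorem cosetGraph_adj_mk_iff {U : Set G} (hU : IsCosetGraphConnectionSet H U) (g₁ g₂ : G) :
    (cosetGraph H U).Adj g₁ g₂ ↔ g₁⁻¹ * g₂ ∈ U := by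
  obtain ⟨hinv, hdisj, hdouble⟩ := hU
  have mem_of_reps : ∀ {g₁ g₂ x₁ x₂ : G}, (x₁ : G ⧸ H) = g₁ → (x₂ : G ⧸ H) = g₂ →
      x₁⁻¹ * x₂ ∈ U → g₁⁻¹ * g₂ ∈ U := by
    intro g₁ g₂ x₁ x₂ h₁ h₂ hx
    rw [QuotientGroup.eq] at h₁ h₂
    rw [← hdouble]
    exact ⟨_, ⟨g₁⁻¹ * x₁, by simpa using H.inv_mem h₁, _, hx, rfl⟩, _, h₂, by group⟩
  rw [cosetGraph, SimpleGraph.fromRel_adj]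
  constructor
  · rintro ⟨-, ⟨x₁, x₂, h₁, h₂, hx⟩ | ⟨x₂, x₁, h₂, h₁, hx⟩⟩
    · exact mem_of_reps h₁ h₂ hx
    · rw [← hinv, Set.mem_inv, mul_inv_rev, inv_inv]
      exact mem_of_reps h₂ h₁ hx
  · intro h
    refine ⟨fun heq => ?_, Or.inl ⟨g₁, g₂, rfl, rfl, h⟩⟩
    rw [QuotientGroup.eq] at heq
    exact (Set.eq_empty_iff_forall_notMem.1 hdisj) _ ⟨heq, h⟩

theorem isCosetGraphConnectionSet_compl (hHA : H ≤ A) :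
    IsCosetGraphConnectionSet H (A : Set G)ᶜ := by
  refine ⟨by rw [Set.compl_inv, inv_coe_set], ?_, ?_⟩
  · exact Set.eq_empty_iff_forall_notMem.2 fun g hg => hg.2 (hHA hg.1)
  · refine Set.Subset.antisymm ?_ fun g hg =>
      ⟨g, ⟨1, H.one_mem, g, hg, one_mul g⟩, 1, H.one_mem, mul_one g⟩
    rintro _ ⟨_, ⟨h₁, hh₁, u, hu, rfl⟩, h₂, hh₂, rfl⟩ hmem
    refine hu ?_
    have : u = h₁⁻¹ * (h₁ * u * h₂) * h₂⁻¹ := by group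
    rw [this]
    exact A.mul_mem (A.mul_mem (A.inv_mem (hHA hh₁)) hmem) (A.inv_mem (hHA hh₂))

theorem ncard_image_mk_eq_relIndex :
    (QuotientGroup.mk '' (A : Set G) : Set (G ⧸ H)).ncard = H.relIndex A := by
  let f : A ⧸ H.subgroupOf A → G ⧸ H :=
    Quotient.map' Subtype.val fun a b hab => by
      simpa [QuotientGroup.leftRel_apply, mem_subgroupOf] using hab
  have hf : Function.Injective f := by
    rintro ⟨a⟩ ⟨b⟩ hab
    refine Quotient.sound' ?_
    simpa [QuotientGroup.leftRel_apply, mem_subgroupOf] using Quotient.exact' hab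
  have hrange : Set.range f = QuotientGroup.mk '' (A : Set G) := by
    ext q
    constructor
    · rintro ⟨⟨a⟩, rfl⟩
      exact ⟨a, a.2, rfl⟩
    · rintro ⟨a, ha, rfl⟩
      exact ⟨QuotientGroup.mk ⟨a, ha⟩, rfl⟩
  rw [← hrange, Set.ncard_range_of_injective hf]
  rfl

theorem isRegularSetOfPair_zero_relIndex (hHA : H ≤ A) :
    IsRegularSetOfPair H A 0 (H.relIndex A) := by
  have hU := isCosetGraphConnectionSet_compl hHA
  refine ⟨_, hU, ?_, ?_⟩
  · rintro _ ⟨a, ha, rfl⟩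
    convert Set.ncard_empty (G ⧸ H)
    refine Set.eq_empty_of_forall_notMem ?_
    rintro _ ⟨⟨b, hb, rfl⟩, hadj⟩
    exact (cosetGraph_adj_mk_iff hU a b).1 hadj (A.mul_mem (A.inv_mem ha) hb)
  · intro v hv
    obtain ⟨g, rfl⟩ := QuotientGroup.mk_surjective v
    have hg : g ∉ A := fun hg => hv ⟨g, hg, rfl⟩
    convert ncard_image_mk_eq_relIndex using 2
    refine Set.Subset.antisymm (fun _ => And.left) ?_
    rintro _ ⟨b, hb, rfl⟩
    refine ⟨⟨b, hb, rfl⟩, (cosetGraph_adj_mk_iff hU g b).2 fun hgb => hg ?_⟩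
    simpa using A.mul_mem hb (A.inv_mem hgb)

theorem le_normalizer_of_relIndex_eq_two (hHA : H ≤ A) (h : H.relIndex A = 2) :
    A ≤ normalizer (H : Set G) :=
  (normal_subgroupOf_iff_le_normalizer hHA).1 (normal_of_index_eq_two h)

theorem coe_mul_eq_of_le {K N : Subgroup G} (hKN : K ≤ N) : (N : Set G) * K = N :=
  (Set.mul_subset_mul_left hKN).trans (N.toSubmonoid.coe_mul_self_eq).subset |>.antisymm
    (Set.subset_mul_left _ K.one_mem)

end

namespace SL23

theorem card_eq : Nat.card SL(2, ZMod 3) = 24 := by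
  rw [Nat.card_eq_fintype_card]
  decide

theorem card_sylow_two (P : Sylow 2 SL(2, ZMod 3)) : Nat.card P = 8 := by
  rw [P.card_eq_multiplicity, card_eq, show (24 : ℕ) = 2 ^ 3 * 3 by norm_num,
    Nat.factorization_mul_apply_of_coprime (by norm_num), Nat.prime_two.factorization_pow,
    Nat.prime_three.factorization]
  simp

def transvection : SL(2, ZMod 3) := ⟨!![1, 1; 0, 1], by decide⟩

theorem conj_transvection_notMem_zpowers (x : SL(2, ZMod 3)) (hx : orderOf x = 4) :
    transvection * x * transvection⁻¹ ∉ zpowers x := by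
  have hx4 : x ^ 4 = 1 := hx ▸ pow_orderOf_eq_one x
  have hx2 : x ^ 2 ≠ 1 := fun h => by simpa [hx] using orderOf_le_of_pow_eq_one two_pos h
  rw [mem_zpowers_iff_mem_range_orderOf, hx]
  clear hx
  revert x
  decide

theorem transvection_notMem_normalizer {H : Subgroup SL(2, ZMod 3)} (hcyc : IsCyclic H)
    (hcard : Nat.card H = 4) : transvection ∉ normalizer (H : Set SL(2, ZMod 3)) := by
  obtain ⟨x, rfl⟩ := H.isCyclic_iff_exists_zpowers_eq_top.1 hcyc
  intro hmem
  exact conj_transvection_notMem_zpowers x (Nat.card_zpowers x ▸ hcard)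
    ((mem_normalizer_iff.1 hmem x).1 (mem_zpowers x))

end SL23

/-- **Remark.** Let `G = SL(2,3)`, let `A` be a Sylow `2`-subgroup of `G` (so `A ≅ Q₈`),
and let `H` be a cyclic subgroup of `A` of order `4`. Then `A` is a `(0,2)`-regular set
of the pair `(G,H)`, yet `G ≠ N_G(H)A`. -/
theorem remark_SL23 (A H : Subgroup (Matrix.SpecialLinearGroup (Fin 2) (ZMod 3)))
    (hA : ∃ P : Sylow 2 (Matrix.SpecialLinearGroup (Fin 2) (ZMod 3)), A = ↑P)
    (hHA : H ≤ A) (hHcyc : IsCyclic ↥H) (hHcard : Nat.card ↥H = 4) :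
    IsRegularSetOfPair H A 0 2 ∧
      (Subgroup.normalizer (H : Set (Matrix.SpecialLinearGroup (Fin 2) (ZMod 3))) : Set (Matrix.SpecialLinearGroup (Fin 2) (ZMod 3))) * (A : Set _)
        ≠ Set.univ := by
  obtain ⟨P, rfl⟩ := hA
  have hrel : H.relIndex P = 2 := by
    have h := relIndex_mul_relIndex _ _ _ bot_le hHA
    rw [relIndex_bot_left, relIndex_bot_left, hHcard, SL23.card_sylow_two] at h
    omega
  have hreg := isRegularSetOfPair_zero_relIndex hHA
  rw [hrel] at hreg
  refine ⟨hreg, ?_⟩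
  rw [coe_mul_eq_of_le (le_normalizer_of_relIndex_eq_two hHA hrel), Set.ne_univ_iff_exists_notMem]
  exact ⟨_, SL23.transvection_notMem_normalizer hHcyc hHcard⟩
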